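/- Let m ≥ 2, let B be a real m×m matrix with Bᵀ = −B and B² = −I, and for x = (x_h,x_v) ∈ ℝᵐ × ℝ let σ(x) = [I_m ; (Bx_h)ᵀ] and U(x) = (|x_h|⁴ + 4x_v²)^{1/4}. Define G(x) = |σ(x)ᵀ∇U(x)|². Then U is a classical solution on ℝ^{m+1}∖{0} of the Aronsson equation for the Hamiltonian H²(x,p) = |σ(x)ᵀp|²: for every x ≠ 0, ∇G(x) · (2σ(x)σ(x)ᵀ∇U(x)) = 0, where 2σ(x)σ(x)ᵀ∇U(x) = (H²)_p(x,∇U(x)). -/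

import Mathlib

open Set
open scoped RealInnerProductSpace

/-- The horizontal part of the gradient of `U : ℝᵐ × ℝ → ℝ`. -/
noncomputable def gradH {m : ℕ} (U : EuclideanSpace ℝ (Fin m) × ℝ → ℝ)
    (x : EuclideanSpace ℝ (Fin m) × ℝ) : EuclideanSpace ℝ (Fin m) :=
  (EuclideanSpace.equiv (Fin m) ℝ).symm
    (fun i => fderiv ℝ U x (EuclideanSpace.single i 1, 0))

/-- The vertical part of the gradient of `U : ℝᵐ × ℝ → ℝ`. -/
noncomputable def gradV {m : ℕ} (U : EuclideanSpace ℝ (Fin m) × ℝ → ℝ)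
    (x : EuclideanSpace ℝ (Fin m) × ℝ) : ℝ :=
  fderiv ℝ U x (0, 1)

/-!
Write `x = (h, v)` and `N = ‖h‖⁴ + 4v²`, so that `U = N^{1/4}` and
`∇U = N^{-3/4} (‖h‖² h, 2v)`. The horizontal gradient is `q = N^{-3/4} (‖h‖² h + 2v Bh)`;
as `B` is an isometry with `Bh ⟂ h`, `G = ‖q‖² = ‖h‖² N^{-1/2}` away from the origin, and
`dG(k, t) = 4v N^{-3/2} (2v ⟪h, k⟫ - ‖h‖² t)`. The Aronsson direction
`(2q, 2⟪Bh, q⟫) = 2N^{-3/4} (‖h‖² (h, 2v) + 2v (Bh, 0))` is a combination of the generators of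
the anisotropic dilations and of the rotations `h ↦ exp(tB) h`, both of which leave `G`
invariant, so `dG` annihilates it.
-/

noncomputable section

variable {E : Type*} [NormedAddCommGroup E]

def koranyiQuartic (x : E × ℝ) : ℝ := ‖x.1‖ ^ 4 + 4 * x.2 ^ 2

lemma koranyiQuartic_pos {x : E × ℝ} (hx : x ≠ 0) : 0 < koranyiQuartic x := by
  unfold koranyiQuartic
  rcases eq_or_ne x.1 0 with h | h
  · have : x.2 ≠ 0 := fun h' => hx (Prod.ext h h')
    positivity
  · have := norm_pos_iff.mpr h
    positivity

variable [InnerProductSpace ℝ E]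

def fderivKoranyiQuartic (x : E × ℝ) : E × ℝ →L[ℝ] ℝ :=
  (4 * ‖x.1‖ ^ 2) • (innerSL ℝ x.1).comp (ContinuousLinearMap.fst ℝ E ℝ)
    + (8 * x.2) • ContinuousLinearMap.snd ℝ E ℝ

@[simp]
lemma fderivKoranyiQuartic_apply (x w : E × ℝ) :
    fderivKoranyiQuartic x w = 4 * ‖x.1‖ ^ 2 * ⟪x.1, w.1⟫ + 8 * x.2 * w.2 := by
  simp [fderivKoranyiQuartic, mul_assoc]

lemma hasFDerivAt_koranyiQuartic (x : E × ℝ) :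
    HasFDerivAt koranyiQuartic (fderivKoranyiQuartic x) x := by
  have hfun : koranyiQuartic = fun z : E × ℝ => (‖z.1‖ ^ 2) ^ 2 + 4 * z.2 ^ 2 := by
    ext z; simp only [koranyiQuartic]; ring
  rw [hfun]
  refine ((hasFDerivAt_fst.norm_sq.pow 2).add ((hasFDerivAt_snd.pow 2).const_mul 4)).congr_fderiv
    (ContinuousLinearMap.ext fun w => ?_)
  simp only [add_apply, smul_apply, ContinuousLinearMap.comp_apply, fderivKoranyiQuartic_apply,
    ContinuousLinearMap.coe_fst', ContinuousLinearMap.coe_snd', innerSL_apply_apply, smul_eq_mul,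
    nsmul_eq_mul, Nat.add_one_sub_one, pow_one, Nat.cast_ofNat]
  ring

lemma hasFDerivAt_koranyiQuartic_rpow {x : E × ℝ} (hx : x ≠ 0) (p : ℝ) :
    HasFDerivAt (fun z => koranyiQuartic z ^ p)
      ((p * koranyiQuartic x ^ (p - 1)) • fderivKoranyiQuartic x) x :=
  (hasFDerivAt_koranyiQuartic x).rpow_const (Or.inl (koranyiQuartic_pos hx).ne')

def koranyiHorizGradSq (x : E × ℝ) : ℝ := ‖x.1‖ ^ 2 * koranyiQuartic x ^ (-(1/2 : ℝ))

lemma hasFDerivAt_koranyiHorizGradSq {x : E × ℝ} (hx : x ≠ 0) :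
    HasFDerivAt koranyiHorizGradSq ((4 * x.2 * koranyiQuartic x ^ (-(3/2 : ℝ))) •
      ((2 * x.2) • (innerSL ℝ x.1).comp (ContinuousLinearMap.fst ℝ E ℝ)
        - ‖x.1‖ ^ 2 • ContinuousLinearMap.snd ℝ E ℝ)) x := by
  have hN := koranyiQuartic_pos hx
  have hpow : koranyiQuartic x ^ (-(1/2 : ℝ))
      = koranyiQuartic x ^ (-(3/2 : ℝ)) * koranyiQuartic x := by
    rw [← Real.rpow_add_one hN.ne']; norm_num
  have hexp : -(1/2 : ℝ) - 1 = -(3/2) := by norm_num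
  refine (hasFDerivAt_fst.norm_sq.mul (hasFDerivAt_koranyiQuartic_rpow hx (-(1/2 : ℝ))))
    |>.congr_fderiv (ContinuousLinearMap.ext fun w => ?_)
  simp only [add_apply, smul_apply, sub_apply, ContinuousLinearMap.comp_apply,
    fderivKoranyiQuartic_apply, ContinuousLinearMap.coe_fst', ContinuousLinearMap.coe_snd',
    innerSL_apply_apply, smul_eq_mul, nsmul_eq_mul, hexp, hpow]
  unfold koranyiQuartic
  ring

variable {B : E →L[ℝ] E}

lemma inner_apply_self_eq_zero_of_skew (hskew : ∀ v w : E, ⟪B v, w⟫ = -⟪v, B w⟫) (v : E) :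
    ⟪B v, v⟫ = 0 := by
  linarith [hskew v v, real_inner_comm v (B v)]

lemma norm_apply_of_skew_of_sq_neg (hskew : ∀ v w : E, ⟪B v, w⟫ = -⟪v, B w⟫)
    (hB2 : ∀ v, B (B v) = -v) (v : E) : ‖B v‖ = ‖v‖ := by
  rw [← sq_eq_sq₀ (norm_nonneg _) (norm_nonneg _), ← real_inner_self_eq_norm_sq,
    ← real_inner_self_eq_norm_sq, hskew, hB2, inner_neg_right, neg_neg]

lemma norm_smul_add_smul_apply_sq (hskew : ∀ v w : E, ⟪B v, w⟫ = -⟪v, B w⟫)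
    (hB2 : ∀ v, B (B v) = -v) (a b : ℝ) (v : E) :
    ‖a • v + b • B v‖ ^ 2 = (a ^ 2 + b ^ 2) * ‖v‖ ^ 2 := by
  rw [norm_add_sq_real, real_inner_smul_left, real_inner_smul_right, real_inner_comm (B v),
    inner_apply_self_eq_zero_of_skew hskew, norm_smul, norm_smul,
    norm_apply_of_skew_of_sq_neg hskew hB2, Real.norm_eq_abs, Real.norm_eq_abs, mul_pow, mul_pow,
    sq_abs, sq_abs]
  ring

lemma inner_self_smul_add_smul_apply (hskew : ∀ v w : E, ⟪B v, w⟫ = -⟪v, B w⟫) (a b : ℝ)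
    (v : E) : ⟪v, a • v + b • B v⟫ = a * ‖v‖ ^ 2 := by
  rw [inner_add_right, real_inner_smul_right, real_inner_smul_right, real_inner_comm (B v),
    inner_apply_self_eq_zero_of_skew hskew, real_inner_self_eq_norm_sq, mul_zero, add_zero]

lemma inner_apply_smul_add_smul_apply (hskew : ∀ v w : E, ⟪B v, w⟫ = -⟪v, B w⟫)
    (hB2 : ∀ v, B (B v) = -v) (a b : ℝ) (v : E) :
    ⟪B v, a • v + b • B v⟫ = b * ‖v‖ ^ 2 := by
  rw [inner_add_right, real_inner_smul_right, real_inner_smul_right,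
    inner_apply_self_eq_zero_of_skew hskew, real_inner_self_eq_norm_sq,
    norm_apply_of_skew_of_sq_neg hskew hB2, mul_zero, zero_add]

def koranyiGauge (x : E × ℝ) : ℝ := koranyiQuartic x ^ ((1 : ℝ) / 4)

lemma hasFDerivAt_koranyiGauge {x : E × ℝ} (hx : x ≠ 0) :
    HasFDerivAt koranyiGauge ((1 / 4 * koranyiQuartic x ^ (-(3/4 : ℝ))) • fderivKoranyiQuartic x)
      x := by
  have h := hasFDerivAt_koranyiQuartic_rpow hx ((1 : ℝ) / 4)
  rwa [show (1 : ℝ) / 4 - 1 = -(3/4) by norm_num] at h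

end

section EuclideanGradient

variable {m : ℕ} {U : EuclideanSpace ℝ (Fin m) × ℝ → ℝ}
  {L : EuclideanSpace ℝ (Fin m) × ℝ →L[ℝ] ℝ} {x : EuclideanSpace ℝ (Fin m) × ℝ}

lemma gradH_eq_of_hasFDerivAt (hL : HasFDerivAt U L x) {a : EuclideanSpace ℝ (Fin m)}
    (ha : ∀ k, L (k, 0) = ⟪a, k⟫) : gradH U x = a := by
  ext i
  simp [gradH, hL.fderiv, ha, EuclideanSpace.inner_single_right]

lemma gradV_eq_of_hasFDerivAt (hL : HasFDerivAt U L x) : gradV U x = L (0, 1) := by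
  rw [gradV, hL.fderiv]

lemma gradH_koranyiGauge (hx : x ≠ 0) :
    gradH koranyiGauge x = (koranyiQuartic x ^ (-(3/4 : ℝ)) * ‖x.1‖ ^ 2) • x.1 :=
  gradH_eq_of_hasFDerivAt (hasFDerivAt_koranyiGauge hx) fun k => by
    simp only [smul_apply, fderivKoranyiQuartic_apply, real_inner_smul_left, smul_eq_mul]
    ring

lemma gradV_koranyiGauge (hx : x ≠ 0) :
    gradV koranyiGauge x = koranyiQuartic x ^ (-(3/4 : ℝ)) * (2 * x.2) := by
  rw [gradV_eq_of_hasFDerivAt (hasFDerivAt_koranyiGauge hx)]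
  simp only [smul_apply, fderivKoranyiQuartic_apply, smul_eq_mul, inner_zero_right]
  ring

lemma norm_horizGrad_koranyiGauge_sq
    {B : EuclideanSpace ℝ (Fin m) →L[ℝ] EuclideanSpace ℝ (Fin m)}
    (hskew : ∀ v w, ⟪B v, w⟫ = -⟪v, B w⟫) (hB2 : ∀ v, B (B v) = -v) (hx : x ≠ 0) :
    ‖gradH koranyiGauge x + gradV koranyiGauge x • B x.1‖ ^ 2 = koranyiHorizGradSq x := by
  rw [gradH_koranyiGauge hx, gradV_koranyiGauge hx, norm_smul_add_smul_apply_sq hskew hB2,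
    koranyiHorizGradSq]
  have hN := koranyiQuartic_pos hx
  have hpow : (koranyiQuartic x ^ (-(3/4 : ℝ))) ^ 2 * koranyiQuartic x
      = koranyiQuartic x ^ (-(1/2 : ℝ)) := by
    rw [← Real.rpow_natCast, ← Real.rpow_mul hN.le, ← Real.rpow_add_one hN.ne']
    norm_num
  have hN_def : koranyiQuartic x = ‖x.1‖ ^ 4 + 4 * x.2 ^ 2 := rfl
  linear_combination
    ‖x.1‖ ^ 2 * hpow - ‖x.1‖ ^ 2 * (koranyiQuartic x ^ (-(3/4 : ℝ))) ^ 2 * hN_def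

end EuclideanGradient

theorem stmt_11 {m : ℕ}
    (B : EuclideanSpace ℝ (Fin m) →L[ℝ] EuclideanSpace ℝ (Fin m))
    (hskew : ∀ v w : EuclideanSpace ℝ (Fin m), ⟪B v, w⟫ = -⟪v, B w⟫)
    (hB2 : ∀ v, B (B v) = -v)
    (U : EuclideanSpace ℝ (Fin m) × ℝ → ℝ)
    (hU : ∀ x : EuclideanSpace ℝ (Fin m) × ℝ,
      U x = (‖x.1‖ ^ 4 + 4 * x.2 ^ 2) ^ ((1:ℝ)/4))
    (G : EuclideanSpace ℝ (Fin m) × ℝ → ℝ)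
    (hG : ∀ x, G x = ‖gradH U x + gradV U x • B x.1‖ ^ 2) :
    ∀ x : EuclideanSpace ℝ (Fin m) × ℝ, x ≠ 0 →
      DifferentiableAt ℝ U x ∧
      ∃ DG : EuclideanSpace ℝ (Fin m) × ℝ →L[ℝ] ℝ,
        HasFDerivAt G DG x ∧
        DG ((2:ℝ) • (gradH U x + gradV U x • B x.1),
            2 * ⟪B x.1, gradH U x + gradV U x • B x.1⟫) = 0 := by
  intro x hx
  obtain rfl : U = koranyiGauge := funext hU
  refine ⟨(hasFDerivAt_koranyiGauge hx).differentiableAt, _,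
    (hasFDerivAt_koranyiHorizGradSq hx).congr_of_eventuallyEq ?_, ?_⟩
  · filter_upwards [eventually_ne_nhds hx] with z hz
    rw [hG, norm_horizGrad_koranyiGauge_sq hskew hB2 hz]
  · rw [gradH_koranyiGauge hx, gradV_koranyiGauge hx]
    simp only [smul_apply, sub_apply, ContinuousLinearMap.comp_apply,
      ContinuousLinearMap.coe_fst', ContinuousLinearMap.coe_snd', innerSL_apply_apply,
      smul_eq_mul, real_inner_smul_right, inner_self_smul_add_smul_apply hskew,
      inner_apply_smul_add_smul_apply hskew hB2]
    ring
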